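/- arXiv:1802.08237 — 7 statements merged into one kernel-verified Lean document; each statement's English description precedes it below -/
import Mathlib

section
/- In the process Central run with parameter ε (0 < ε ≤ 1/10) on a finite simple graph G with n ≥ 2 vertices: (i) for every iteration t ≥ 0 and every vertex v, the weight ∑_{e ∋ v} x_e(t) is at most 1 (so x(t) is a fractional matching at all times); and (ii) for every integer t ≥ 1 + ln(n)/ln(1/(1-ε)), every edge of G has an endpoint in F_t, i.e., all edges are frozen after at most O(log n / ε) iterations. -/
/-!
A vertex keeps growing the weights of its edges only while its load is below `1 - 2ε`, and one
step multiplies the load by at most `(1 - ε)⁻¹`, so a load never exceeds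
`(1 - 2ε) / (1 - ε) ≤ 1`. An edge that is never frozen has weight `(1 - ε)⁻ᵗ / n`, which reaches `1`
once `t ≥ log n / log (1 / (1 - ε))`; but the weight of an edge is bounded by the load of its
endpoints, which stays below `1 - 2ε` as long as they are active.
-/

open Finset

namespace Central

variable {V : Type*} [DecidableEq V]

def load (E : Finset (Sym2 V)) (x : Sym2 V → ℝ) (v : V) : ℝ :=
  ∑ e ∈ E.filter (fun e => v ∈ e), x e

theorem weight_le_load {E : Finset (Sym2 V)} {x : Sym2 V → ℝ} (hx : ∀ e ∈ E, 0 ≤ x e)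
    {e : Sym2 V} (he : e ∈ E) {v : V} (hv : v ∈ e) : x e ≤ load E x v :=
  single_le_sum (fun e' he' => hx e' (mem_filter.mp he').1) (mem_filter.mpr ⟨he, hv⟩)

theorem load_zero_le_one [Fintype V] (G : SimpleGraph V) [DecidableRel G.Adj] {x : Sym2 V → ℝ}
    (hx : ∀ e ∈ G.edgeFinset, x e = 1 / Fintype.card V) (v : V) :
    load G.edgeFinset x v ≤ 1 := by
  have hdeg : load G.edgeFinset x v = G.degree v / Fintype.card V := by
    rw [load, sum_congr rfl fun e he => hx e (mem_filter.mp he).1, sum_const,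
      ← G.incidenceFinset_eq_filter, G.card_incidenceFinset_eq_degree, nsmul_eq_mul, mul_one_div]
  rw [hdeg]
  exact div_le_one_of_le₀ (by exact_mod_cast (G.degree_lt_card_verts v).le) (Nat.cast_nonneg _)

/-- The update rules of `Central` on the edge set `E`, without its initial state. -/
structure IsRun [Fintype V] (E : Finset (Sym2 V)) (ε : ℝ) (F : ℕ → Finset V)
    (x : ℕ → Sym2 V → ℝ) : Prop where
  frozen_succ : ∀ t, F (t + 1) = F t ∪ univ.filter (fun v => 1 - 2 * ε ≤ load E (x t) v)
  weight_succ : ∀ t, ∀ e ∈ E,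
    x (t + 1) e = if ∃ v ∈ F (t + 1), v ∈ e then x t e else x t e / (1 - ε)

namespace IsRun

variable [Fintype V] {E : Finset (Sym2 V)} {ε : ℝ} {F : ℕ → Finset V} {x : ℕ → Sym2 V → ℝ}

theorem frozen_subset_succ (h : IsRun E ε F x) (t : ℕ) : F t ⊆ F (t + 1) := by
  rw [h.frozen_succ t]
  exact subset_union_left

theorem load_lt_of_notMem_frozen (h : IsRun E ε F x) {t : ℕ} {v : V} (hv : v ∉ F (t + 1)) :
    load E (x t) v < 1 - 2 * ε := by
  contrapose! hv
  rw [h.frozen_succ t]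
  exact mem_union_right _ (mem_filter.mpr ⟨mem_univ v, hv⟩)

theorem weight_nonneg (h : IsRun E ε F x) (hε : ε < 1) (h0 : ∀ e ∈ E, 0 ≤ x 0 e) :
    ∀ t, ∀ e ∈ E, 0 ≤ x t e
  | 0, e, he => h0 e he
  | t + 1, e, he => by
    rw [h.weight_succ t e he]
    split_ifs
    · exact h.weight_nonneg hε h0 t e he
    · exact div_nonneg (h.weight_nonneg hε h0 t e he) (by linarith)

theorem load_succ_of_mem_frozen (h : IsRun E ε F x) {t : ℕ} {v : V} (hv : v ∈ F (t + 1)) :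
    load E (x (t + 1)) v = load E (x t) v :=
  sum_congr rfl fun e he => by
    rw [h.weight_succ t e (mem_filter.mp he).1, if_pos ⟨v, hv, (mem_filter.mp he).2⟩]

theorem load_succ_le (h : IsRun E ε F x) (hε0 : 0 ≤ ε) (hε1 : ε < 1) (h0 : ∀ e ∈ E, 0 ≤ x 0 e)
    (t : ℕ) (v : V) : load E (x (t + 1)) v ≤ load E (x t) v / (1 - ε) := by
  rw [load, load, sum_div]
  refine sum_le_sum fun e he => ?_
  have he := (mem_filter.mp he).1
  rw [h.weight_succ t e he]
  split_ifs
  · exact le_div_self (h.weight_nonneg hε1 h0 t e he) (by linarith) (by linarith)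
  · exact le_rfl

theorem load_le_one (h : IsRun E ε F x) (hε0 : 0 ≤ ε) (hε1 : ε < 1) (h0 : ∀ e ∈ E, 0 ≤ x 0 e)
    (hload0 : ∀ v, load E (x 0) v ≤ 1) : ∀ t v, load E (x t) v ≤ 1
  | 0, v => hload0 v
  | t + 1, v => by
    by_cases hv : v ∈ F (t + 1)
    · rw [h.load_succ_of_mem_frozen hv]
      exact h.load_le_one hε0 hε1 h0 hload0 t v
    · calc load E (x (t + 1)) v ≤ load E (x t) v / (1 - ε) := h.load_succ_le hε0 hε1 h0 t v
        _ ≤ (1 - 2 * ε) / (1 - ε) :=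
          div_le_div_of_nonneg_right (h.load_lt_of_notMem_frozen hv).le (by linarith)
        _ ≤ 1 := (div_le_one (by linarith)).mpr (by linarith)

theorem weight_eq_of_active (h : IsRun E ε F x) {e : Sym2 V} (he : e ∈ E) :
    ∀ t, (∀ v ∈ e, v ∉ F t) → x t e = x 0 e / (1 - ε) ^ t
  | 0, _ => by rw [pow_zero, div_one]
  | t + 1, hactive => by
    have hprev : ∀ v ∈ e, v ∉ F t := fun v hv hvF => hactive v hv (h.frozen_subset_succ t hvF)
    rw [h.weight_succ t e he, if_neg (fun ⟨v, hvF, hv⟩ => hactive v hv hvF),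
      h.weight_eq_of_active he t hprev, pow_succ, div_div]

theorem exists_mem_frozen_of_le_weight (h : IsRun E ε F x) (hε : ε < 1)
    (h0 : ∀ e ∈ E, 0 ≤ x 0 e) {e : Sym2 V} (he : e ∈ E) {s : ℕ}
    (hs : 1 - 2 * ε ≤ x 0 e / (1 - ε) ^ s) : ∃ v ∈ F (s + 1), v ∈ e := by
  by_contra! hactive
  have hactive_s : ∀ v ∈ e, v ∉ F s :=
    fun v hv hvF => hactive v (h.frozen_subset_succ s hvF) hv
  have hv := e.out_fst_mem
  have hload := h.load_lt_of_notMem_frozen fun hvF => hactive _ hvF hv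
  have hweight := weight_le_load (h.weight_nonneg hε h0 s) he hv
  rw [h.weight_eq_of_active he s hactive_s] at hweight
  linarith

end IsRun

end Central

theorem one_le_one_div_div_pow_of_log_div_log_le {a q : ℝ} (ha : 0 < a) (hq0 : 0 < q)
    (hq1 : q < 1) {s : ℕ} (hs : Real.log a / Real.log (1 / q) ≤ s) : 1 ≤ 1 / a / q ^ s := by
  have hlog : 0 < Real.log (1 / q) := Real.log_pos (one_lt_one_div hq0 hq1)
  have hgrowth : a ≤ (1 / q) ^ s :=
    (Real.le_pow_iff_log_le ha (by positivity)).mpr ((div_le_iff₀ hlog).mp hs)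
  rw [one_div_pow, le_div_iff₀ (pow_pos hq0 s)] at hgrowth
  rw [div_div]
  exact one_le_one_div (by positivity) hgrowth

theorem central_fractional_matching_and_termination_general
    {V : Type*} [Fintype V] [DecidableEq V] (G : SimpleGraph V) [DecidableRel G.Adj]
    (n : ℕ) (hn : n = Fintype.card V) (hn2 : 2 ≤ n)
    (ε : ℝ) (hε0 : 0 < ε) (hε1 : ε ≤ 1 / 10)
    (F : ℕ → Finset V) (x : ℕ → Sym2 V → ℝ)
    (hx0 : ∀ e ∈ G.edgeFinset, x 0 e = 1 / n)
    (hF : ∀ t : ℕ, F (t + 1) = F t ∪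
      Finset.univ.filter
        (fun v => 1 - 2 * ε ≤ ∑ e ∈ G.edgeFinset.filter (fun e => v ∈ e), x t e))
    (hx : ∀ t : ℕ, ∀ e ∈ G.edgeFinset,
      x (t + 1) e = if ∃ v ∈ F (t + 1), v ∈ e then x t e else x t e / (1 - ε)) :
    (∀ t : ℕ, ∀ v : V, ∑ e ∈ G.edgeFinset.filter (fun e => v ∈ e), x t e ≤ 1) ∧
    (∀ t : ℕ, 1 + Real.log n / Real.log (1 / (1 - ε)) ≤ (t : ℝ) →
      ∀ e ∈ G.edgeFinset, ∃ v ∈ F t, v ∈ e) := by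
  have run : Central.IsRun G.edgeFinset ε F x := ⟨hF, hx⟩
  have hε : ε < 1 := by linarith
  have hnpos : (0 : ℝ) < n := by exact_mod_cast (by omega : 0 < n)
  have h0 : ∀ e ∈ G.edgeFinset, 0 ≤ x 0 e := fun e he => by rw [hx0 e he]; positivity
  refine ⟨run.load_le_one hε0.le hε h0 (Central.load_zero_le_one G (hn ▸ hx0)),
    fun t ht e he => ?_⟩
  have hratio : 0 ≤ Real.log n / Real.log (1 / (1 - ε)) :=
    div_nonneg (Real.log_nonneg (by exact_mod_cast (by omega : 1 ≤ n)))
      (Real.log_pos (one_lt_one_div (by linarith) (by linarith))).le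
  cases t with
  | zero => push_cast at ht; linarith
  | succ s =>
    refine run.exists_mem_frozen_of_le_weight hε h0 he ?_
    rw [hx0 e he]
    calc 1 - 2 * ε ≤ 1 := by linarith
      _ ≤ 1 / n / (1 - ε) ^ s := one_le_one_div_div_pow_of_log_div_log_le hnpos
          (by linarith) (by linarith) (by push_cast at ht; linarith)

/-- In the process `Central` run with parameter `ε` (`0 < ε ≤ 1/10`) on a
finite simple graph `G` with `n ≥ 2` vertices:
(i) for every iteration `t` and vertex `v`, the weight `∑_{e ∋ v} x_e(t)` is at most `1`;
(ii) for every integer `t ≥ 1 + ln n / ln (1/(1-ε))`, every edge has an endpoint in `F_t`. -/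
theorem central_fractional_matching_and_termination
    {V : Type*} [Fintype V] [DecidableEq V] (G : SimpleGraph V) [DecidableRel G.Adj]
    (n : ℕ) (hn : n = Fintype.card V) (hn2 : 2 ≤ n)
    (ε : ℝ) (hε0 : 0 < ε) (hε1 : ε ≤ 1 / 10)
    (F : ℕ → Finset V) (x : ℕ → Sym2 V → ℝ)
    (hF0 : F 0 = ∅)
    (hx0 : ∀ e ∈ G.edgeFinset, x 0 e = 1 / n)
    (hF : ∀ t : ℕ, F (t + 1) = F t ∪
      Finset.univ.filter
        (fun v => 1 - 2 * ε ≤ ∑ e ∈ G.edgeFinset.filter (fun e => v ∈ e), x t e))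
    (hx : ∀ t : ℕ, ∀ e ∈ G.edgeFinset,
      x (t + 1) e = if ∃ v ∈ F (t + 1), v ∈ e then x t e else x t e / (1 - ε)) :
    (∀ t : ℕ, ∀ v : V, ∑ e ∈ G.edgeFinset.filter (fun e => v ∈ e), x t e ≤ 1) ∧
    (∀ t : ℕ, 1 + Real.log n / Real.log (1 / (1 - ε)) ≤ (t : ℝ) →
      ∀ e ∈ G.edgeFinset, ∃ v ∈ F t, v ∈ e) :=
  central_fractional_matching_and_termination_general G n hn hn2 ε hε0 hε1 F x hx0 hF hx
end

section
/- Let T be any iteration of the process Central (run with 0 < ε ≤ 1/10 on a finite simple graph G with n ≥ 2 vertices) at which every edge of G has an endpoint in F_T. Then F_T is a vertex cover of G, and |F_T| ≤ (2 + 5ε)·τ(G), where τ(G) denotes the minimum size of a vertex cover of G. -/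
/-!
The final weights `x_T` form a fractional matching: every load `∑_{e ∋ v} x_e` stays at most `1`,
because a vertex outside `F` had load below `1 - 2ε` before its edges were scaled by `1/(1-ε)`,
and a vertex of `F` has its load frozen at a value `≥ 1 - 2ε`. Double counting then gives, for
every vertex cover `C`, `(1 - 2ε)|F_T| ≤ ∑_{v ∈ F_T} load v ≤ 2 ∑_e x_e ≤ ∑_{v ∈ C} load v ≤ |C|`,
and `2 / (1 - 2ε) ≤ 2 + 5ε` exactly when `ε ≤ 1/10`.
-/

open Finset

theorem Sym2.card_filter_mem_le_two {α : Type*} [DecidableEq α] (A : Finset α) (e : Sym2 α) :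
    #{a ∈ A | a ∈ e} ≤ 2 :=
  calc #{a ∈ A | a ∈ e} ≤ #e.toFinset :=
        card_le_card fun a ha => Sym2.mem_toFinset.2 (mem_filter.1 ha).2
    _ ≤ 2 := by rw [Sym2.card_toFinset]; split_ifs <;> norm_num

section

variable {V : Type*} [Fintype V] [DecidableEq V]

namespace SimpleGraph

variable (G : SimpleGraph V) [DecidableRel G.Adj]

def load (w : Sym2 V → ℝ) (v : V) : ℝ := ∑ e ∈ G.edgeFinset with v ∈ e, w e

variable {G}

theorem sum_load_eq (w : Sym2 V → ℝ) (A : Finset V) :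
    ∑ v ∈ A, G.load w v = ∑ e ∈ G.edgeFinset, (#{v ∈ A | v ∈ e} : ℝ) * w e := by
  simp only [load, sum_filter]
  rw [sum_comm]
  refine sum_congr rfl fun e _ => ?_
  rw [← sum_filter, sum_const, nsmul_eq_mul]

theorem sum_load_le_two_mul_sum {w : Sym2 V → ℝ} (hw : ∀ e ∈ G.edgeFinset, 0 ≤ w e)
    (A : Finset V) : ∑ v ∈ A, G.load w v ≤ 2 * ∑ e ∈ G.edgeFinset, w e := by
  rw [sum_load_eq, mul_sum]
  refine sum_le_sum fun e he => mul_le_mul_of_nonneg_right ?_ (hw e he)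
  exact_mod_cast Sym2.card_filter_mem_le_two A e

theorem sum_le_sum_load_of_cover {w : Sym2 V → ℝ} (hw : ∀ e ∈ G.edgeFinset, 0 ≤ w e)
    {C : Finset V} (hC : ∀ e ∈ G.edgeFinset, ∃ v ∈ C, v ∈ e) :
    ∑ e ∈ G.edgeFinset, w e ≤ ∑ v ∈ C, G.load w v := by
  rw [sum_load_eq]
  refine sum_le_sum fun e he => le_mul_of_one_le_left (hw e he) ?_
  obtain ⟨v, hvC, hve⟩ := hC e he
  exact_mod_cast card_pos.2 ⟨v, mem_filter.2 ⟨hvC, hve⟩⟩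

theorem mul_card_le_two_mul_card_of_cover {w : Sym2 V → ℝ} (hw : ∀ e ∈ G.edgeFinset, 0 ≤ w e)
    {δ : ℝ} {F C : Finset V} (hF : ∀ v ∈ F, δ ≤ G.load w v) (hC₁ : ∀ v ∈ C, G.load w v ≤ 1)
    (hC : ∀ e ∈ G.edgeFinset, ∃ v ∈ C, v ∈ e) : δ * #F ≤ 2 * #C :=
  calc δ * #F = ∑ _v ∈ F, δ := by rw [sum_const, nsmul_eq_mul, mul_comm]
    _ ≤ ∑ v ∈ F, G.load w v := sum_le_sum hF
    _ ≤ 2 * ∑ e ∈ G.edgeFinset, w e := sum_load_le_two_mul_sum hw F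
    _ ≤ 2 * ∑ v ∈ C, G.load w v := by gcongr; exact sum_le_sum_load_of_cover hw hC
    _ ≤ 2 * ∑ _v ∈ C, (1 : ℝ) := by gcongr with v hv; exact hC₁ v hv
    _ = 2 * #C := by rw [sum_const, nsmul_eq_mul, mul_one]

end SimpleGraph

theorem le_two_add_five_mul_of_one_sub_two_mul_le {ε a c : ℝ} (hε0 : 0 ≤ ε) (hε1 : ε ≤ 1 / 10)
    (hc : 0 ≤ c) (h : (1 - 2 * ε) * a ≤ 2 * c) : a ≤ (2 + 5 * ε) * c := by
  have hpos : 0 < 1 - 2 * ε := by linarith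
  have hgap : 0 ≤ (ε - 10 * ε ^ 2) * c := mul_nonneg (by nlinarith) hc
  refine le_of_mul_le_mul_left ?_ hpos
  nlinarith

structure IsCentralRun (G : SimpleGraph V) [DecidableRel G.Adj] (ε : ℝ) (F : ℕ → Finset V)
    (x : ℕ → Sym2 V → ℝ) : Prop where
  F_zero : F 0 = ∅
  x_zero : ∀ e ∈ G.edgeFinset, x 0 e = 1 / Fintype.card V
  F_succ : ∀ t, F (t + 1) = F t ∪ univ.filter (fun v => 1 - 2 * ε ≤ G.load (x t) v)
  x_succ : ∀ t, ∀ e ∈ G.edgeFinset,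
    x (t + 1) e = if ∃ v ∈ F (t + 1), v ∈ e then x t e else x t e / (1 - ε)

namespace IsCentralRun

variable {G : SimpleGraph V} [DecidableRel G.Adj] {ε : ℝ} {F : ℕ → Finset V}
  {x : ℕ → Sym2 V → ℝ}

theorem weight_nonneg (h : IsCentralRun G ε F x) (hε : ε < 1) (t : ℕ) :
    ∀ e ∈ G.edgeFinset, 0 ≤ x t e := by
  induction t with
  | zero => intro e he; rw [h.x_zero e he]; positivity
  | succ t ih =>
    intro e he
    rw [h.x_succ t e he]
    split_ifs
    · exact ih e he
    · exact div_nonneg (ih e he) (by linarith)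

theorem load_succ_of_mem (h : IsCentralRun G ε F x) {t : ℕ} {v : V} (hv : v ∈ F (t + 1)) :
    G.load (x (t + 1)) v = G.load (x t) v :=
  sum_congr rfl fun e he => by
    rw [mem_filter] at he
    rw [h.x_succ t e he.1, if_pos ⟨v, hv, he.2⟩]

theorem load_succ_le (h : IsCentralRun G ε F x) (hε0 : 0 ≤ ε) (hε : ε < 1) (t : ℕ) (v : V) :
    G.load (x (t + 1)) v ≤ G.load (x t) v / (1 - ε) := by
  have hpos : 0 < 1 - ε := by linarith
  rw [SimpleGraph.load, SimpleGraph.load, sum_div]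
  refine sum_le_sum fun e he => ?_
  rw [mem_filter] at he
  rw [h.x_succ t e he.1]
  split_ifs
  · exact le_div_self (h.weight_nonneg hε t e he.1) hpos (by linarith)
  · exact le_rfl

theorem load_lt_of_notMem (h : IsCentralRun G ε F x) {t : ℕ} {v : V} (hv : v ∉ F (t + 1)) :
    G.load (x t) v < 1 - 2 * ε := by
  rw [h.F_succ t, mem_union, mem_filter, not_or, not_and, not_le] at hv
  exact hv.2 (mem_univ v)

theorem load_zero_le_one (h : IsCentralRun G ε F x) (v : V) : G.load (x 0) v ≤ 1 := by
  have hdeg : (G.degree v : ℝ) ≤ Fintype.card V := by exact_mod_cast (G.degree_lt_card_verts v).le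
  calc G.load (x 0) v = G.degree v * (1 / Fintype.card V) := by
        rw [SimpleGraph.load, sum_congr rfl fun e he => h.x_zero e (mem_filter.1 he).1, sum_const,
          ← G.incidenceFinset_eq_filter, G.card_incidenceFinset_eq_degree, nsmul_eq_mul]
    _ ≤ 1 := by
        rw [mul_one_div]
        exact div_le_one_of_le₀ hdeg (Nat.cast_nonneg _)

theorem load_le_one (h : IsCentralRun G ε F x) (hε0 : 0 ≤ ε) (hε1 : ε < 1) (t : ℕ) (v : V) :
    G.load (x t) v ≤ 1 := by
  induction t generalizing v with
  | zero => exact h.load_zero_le_one v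
  | succ t ih =>
    by_cases hv : v ∈ F (t + 1)
    · rw [h.load_succ_of_mem hv]; exact ih v
    · calc G.load (x (t + 1)) v ≤ G.load (x t) v / (1 - ε) := h.load_succ_le hε0 hε1 t v
        _ ≤ 1 := by
          rw [div_le_one (by linarith)]
          linarith [h.load_lt_of_notMem hv]

theorem le_load_of_mem (h : IsCentralRun G ε F x) (t : ℕ) :
    ∀ v ∈ F t, 1 - 2 * ε ≤ G.load (x t) v := by
  induction t with
  | zero => simp [h.F_zero]
  | succ t ih =>
    intro v hv
    rw [h.load_succ_of_mem hv]
    rw [h.F_succ t, mem_union, mem_filter] at hv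
    exact hv.elim (ih v) And.right

end IsCentralRun

end

theorem central_vertex_cover_approximation_general
    {V : Type*} [Fintype V] [DecidableEq V] (G : SimpleGraph V) [DecidableRel G.Adj]
    (n : ℕ) (hn : n = Fintype.card V)
    (ε : ℝ) (hε0 : 0 < ε) (hε1 : ε ≤ 1 / 10)
    (F : ℕ → Finset V) (x : ℕ → Sym2 V → ℝ)
    (hF0 : F 0 = ∅)
    (hx0 : ∀ e ∈ G.edgeFinset, x 0 e = 1 / n)
    (hF : ∀ t : ℕ, F (t + 1) = F t ∪
      Finset.univ.filter
        (fun v => 1 - 2 * ε ≤ ∑ e ∈ G.edgeFinset.filter (fun e => v ∈ e), x t e))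
    (hx : ∀ t : ℕ, ∀ e ∈ G.edgeFinset,
      x (t + 1) e = if ∃ v ∈ F (t + 1), v ∈ e then x t e else x t e / (1 - ε))
    (T : ℕ) (hT : ∀ e ∈ G.edgeFinset, ∃ v ∈ F T, v ∈ e) :
    (∀ e ∈ G.edgeFinset, ∃ v ∈ F T, v ∈ e) ∧
    (∀ C : Finset V, (∀ e ∈ G.edgeFinset, ∃ v ∈ C, v ∈ e) →
      ((F T).card : ℝ) ≤ (2 + 5 * ε) * C.card) := by
  subst hn
  have hrun : IsCentralRun G ε F x := ⟨hF0, hx0, hF, hx⟩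
  have hε1' : ε < 1 := by linarith
  refine ⟨hT, fun C hC => le_two_add_five_mul_of_one_sub_two_mul_le hε0.le hε1 (by positivity) ?_⟩
  exact G.mul_card_le_two_mul_card_of_cover (hrun.weight_nonneg hε1' T) (hrun.le_load_of_mem T)
    (fun v _ => hrun.load_le_one hε0.le hε1' T v) hC

/-- If at iteration `T` of the process `Central` every edge of `G` has an
endpoint in `F_T`, then `F_T` is a vertex cover of `G` of size at most `(2 + 5ε)` times the
minimum vertex cover size (equivalently, `|F_T| ≤ (2+5ε)·|C|` for every vertex cover `C`). -/
theorem central_vertex_cover_approximation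
    {V : Type*} [Fintype V] [DecidableEq V] (G : SimpleGraph V) [DecidableRel G.Adj]
    (n : ℕ) (hn : n = Fintype.card V) (hn2 : 2 ≤ n)
    (ε : ℝ) (hε0 : 0 < ε) (hε1 : ε ≤ 1 / 10)
    (F : ℕ → Finset V) (x : ℕ → Sym2 V → ℝ)
    (hF0 : F 0 = ∅)
    (hx0 : ∀ e ∈ G.edgeFinset, x 0 e = 1 / n)
    (hF : ∀ t : ℕ, F (t + 1) = F t ∪
      Finset.univ.filter
        (fun v => 1 - 2 * ε ≤ ∑ e ∈ G.edgeFinset.filter (fun e => v ∈ e), x t e))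
    (hx : ∀ t : ℕ, ∀ e ∈ G.edgeFinset,
      x (t + 1) e = if ∃ v ∈ F (t + 1), v ∈ e then x t e else x t e / (1 - ε))
    (T : ℕ) (hT : ∀ e ∈ G.edgeFinset, ∃ v ∈ F T, v ∈ e) :
    (∀ e ∈ G.edgeFinset, ∃ v ∈ F T, v ∈ e) ∧
    (∀ C : Finset V, (∀ e ∈ G.edgeFinset, ∃ v ∈ C, v ∈ e) →
      ((F T).card : ℝ) ≤ (2 + 5 * ε) * C.card) :=
  central_vertex_cover_approximation_general G n hn ε hε0 hε1 F x hF0 hx0 hF hx T hT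
end

section
/- Consider the random-order greedy MIS process on a finite simple graph G with n ≥ 2 vertices, and let 1 ≤ r ≤ n. With probability at least 1 - n^{-4} over the uniformly random permutation, every vertex of the residual graph G_r has degree at most 20·n·ln(n)/r in G_r. -/
/-!
Fix a vertex `v` and a threshold `d`, and let `Bᵢ` be the set of orders under which `v` survives
the first `i` steps with at least `d` surviving neighbours. Exchanging any of these neighbours `u`
into rank `i` leaves the first `i` steps unchanged and then removes `v`; the pair (order, `u`)
is recovered from the new order and the old rank of `u`. Counting these pairs gives
`d · #Bᵢ ≤ n · (#Bᵢ - #Bᵢ₊₁)`, so `#B_r ≤ (1 - d/n)^r · n! ≤ e^{-dr/n} · n!`. For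
`d > 20 n ln n / r` this is at most `n⁻⁵ · n!`, and a union bound over the `n` vertices
finishes the proof.
-/

open Finset

/-- The set of vertices remaining after the random-order greedy MIS process has processed the
first `r` ranks, where `σ : Fin n ≃ V` lists the vertices in rank order: when the vertex of
rank `r` is still present, it is added to the independent set and removed together with all of
its neighbors. -/
def greedyRemaining {V : Type*} [Fintype V] [DecidableEq V] (G : SimpleGraph V)
    [DecidableRel G.Adj] {n : ℕ} (σ : Fin n ≃ V) : ℕ → Finset V
  | 0 => Finset.univ
  | r + 1 =>
    let prev := greedyRemaining G σ r
    if h : r < n then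
      if σ ⟨r, h⟩ ∈ prev then prev \ insert (σ ⟨r, h⟩) (G.neighborFinset (σ ⟨r, h⟩))
      else prev
    else prev

theorem natCast_sub_le_mul_exp_neg (n d : ℕ) :
    ((n - d : ℕ) : ℝ) ≤ n * Real.exp (-(d / n)) := by
  rcases le_or_gt d n with hd | hd
  · rcases n.eq_zero_or_pos with rfl | hn
    · simp
    have h := Real.add_one_le_exp (-(d / n))
    calc ((n - d : ℕ) : ℝ) = n * (-(d / n) + 1) := by
          rw [Nat.cast_sub hd]; field_simp; ring
      _ ≤ n * Real.exp (-(d / n)) := by gcongr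
  · rw [Nat.sub_eq_zero_of_le hd.le, Nat.cast_zero]
    positivity

theorem one_sub_le_card_filter_div {α : Type*} [Fintype α] [Nonempty α] (p : α → Prop)
    [DecidablePred p] {ε : ℝ} (h : (#(univ.filter fun a => ¬p a) : ℝ) ≤ ε * Fintype.card α) :
    1 - ε ≤ #(univ.filter p) / Fintype.card α := by
  have hsum : (#(univ.filter p) : ℝ) + #(univ.filter fun a => ¬p a) = Fintype.card α := by
    exact_mod_cast card_filter_add_card_filter_not (s := univ) p
  rw [le_div_iff₀ (by exact_mod_cast Fintype.card_pos)]
  linarith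

theorem mul_exp_neg_le_one_div_pow_four {n : ℕ} (hn : 0 < n) {x : ℝ} (hx : 5 * Real.log n ≤ x) :
    n * Real.exp (-x) ≤ 1 / (n : ℝ) ^ 4 := by
  have hn' : (0 : ℝ) < n := by exact_mod_cast hn
  calc n * Real.exp (-x) ≤ n * Real.exp (-(5 * Real.log n)) := by gcongr
    _ = 1 / (n : ℝ) ^ 4 := by
      rw [Real.exp_neg, show (5 : ℝ) = (5 : ℕ) by norm_num, Real.exp_nat_mul, Real.exp_log hn']
      field_simp

section SwapRank

variable {α V : Type*} [DecidableEq α]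

def swapRank (σ : α ≃ V) (a : α) (u : V) : α ≃ V :=
  (Equiv.swap a (σ.symm u)).trans σ

theorem swapRank_apply_self (σ : α ≃ V) (a : α) (u : V) : swapRank σ a u a = u := by
  simp [swapRank]

theorem swapRank_apply_of_ne (σ : α ≃ V) {a k : α} {u : V} (hka : k ≠ a) (hku : k ≠ σ.symm u) :
    swapRank σ a u k = σ k := by
  simp [swapRank, Equiv.swap_apply_of_ne_of_ne hka hku]

theorem swap_trans_swapRank (σ : α ≃ V) (a : α) (u : V) :
    (Equiv.swap a (σ.symm u)).trans (swapRank σ a u) = σ := by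
  ext x
  simp [swapRank]

end SwapRank

section GreedyProcess

variable {V : Type*} [Fintype V] [DecidableEq V] (G : SimpleGraph V) [DecidableRel G.Adj]
  {n : ℕ}

theorem greedyRemaining_succ_subset (σ : Fin n ≃ V) (i : ℕ) :
    greedyRemaining G σ (i + 1) ⊆ greedyRemaining G σ i := by
  rw [greedyRemaining]
  split_ifs <;> simp [sdiff_subset]

theorem greedyRemaining_antitone (σ : Fin n ≃ V) : Antitone (greedyRemaining G σ) :=
  antitone_nat_of_succ_le (greedyRemaining_succ_subset G σ)

theorem greedyRemaining_congr {σ τ : Fin n ≃ V} {i : ℕ}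
    (h : ∀ k : Fin n, (k : ℕ) < i → σ k = τ k) :
    greedyRemaining G σ i = greedyRemaining G τ i := by
  induction i with
  | zero => rfl
  | succ i ih =>
    rw [greedyRemaining, greedyRemaining, ih fun k hk => h k (by omega)]
    by_cases hi : i < n
    · have hσi : σ ⟨i, hi⟩ = τ ⟨i, hi⟩ := h _ (by simp)
      simp only [dif_pos hi]
      rw [hσi]
    · simp only [dif_neg hi]

theorem le_symm_apply_of_mem_greedyRemaining {σ : Fin n ≃ V} {i : ℕ} {v : V}
    (hv : v ∈ greedyRemaining G σ i) : i ≤ σ.symm v := by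
  by_contra! hlt
  have hv' : v ∈ greedyRemaining G σ (σ.symm v + 1) := greedyRemaining_antitone G σ hlt hv
  have hv'' : σ ⟨σ.symm v, (σ.symm v).2⟩ ∈ greedyRemaining G σ (σ.symm v) := by
    simpa using greedyRemaining_succ_subset G σ _ hv'
  rw [greedyRemaining, dif_pos (σ.symm v).2, if_pos hv''] at hv'
  simp at hv'

theorem notMem_greedyRemaining_succ_of_adj {σ : Fin n ≃ V} {i : ℕ} (hi : i < n) {u v : V}
    (hu : u ∈ greedyRemaining G σ i) (huv : G.Adj u v) (hσ : σ ⟨i, hi⟩ = u) :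
    v ∉ greedyRemaining G σ (i + 1) := by
  rw [greedyRemaining, dif_pos hi, hσ, if_pos hu]
  simp [huv]

theorem greedyRemaining_swapRank {σ : Fin n ≃ V} {i : ℕ} (hi : i < n) {u : V}
    (hu : u ∈ greedyRemaining G σ i) :
    greedyRemaining G (swapRank σ ⟨i, hi⟩ u) i = greedyRemaining G σ i := by
  have hiu := le_symm_apply_of_mem_greedyRemaining G hu
  refine greedyRemaining_congr G fun k hk => swapRank_apply_of_ne σ ?_ ?_
  · exact Fin.ne_of_val_ne (by simp only; omega)
  · exact Fin.ne_of_val_ne (by omega)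

variable (n) in
def highDegreeSurvivors (v : V) (d i : ℕ) : Finset (Fin n ≃ V) :=
  univ.filter fun σ => v ∈ greedyRemaining G σ i ∧
    d ≤ #((greedyRemaining G σ i).filter fun u => G.Adj v u)

theorem highDegreeSurvivors_succ_subset (v : V) (d i : ℕ) :
    highDegreeSurvivors G n v d (i + 1) ⊆ highDegreeSurvivors G n v d i := by
  intro σ hσ
  simp only [highDegreeSurvivors, mem_filter, mem_univ, true_and] at hσ ⊢
  exact ⟨greedyRemaining_succ_subset G σ i hσ.1,
    hσ.2.trans (card_le_card (filter_subset_filter _ (greedyRemaining_succ_subset G σ i)))⟩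

theorem card_highDegreeSurvivors_succ_le (v : V) (d : ℕ) {i : ℕ} (hi : i < n) :
    n * #(highDegreeSurvivors G n v d (i + 1)) ≤ (n - d) * #(highDegreeSurvivors G n v d i) := by
  set B := highDegreeSurvivors G n v d i
  set B' := highDegreeSurvivors G n v d (i + 1)
  have hB'B : B' ⊆ B := highDegreeSurvivors_succ_subset G v d i
  set S := B.sigma fun σ => (greedyRemaining G σ i).filter fun u => G.Adj v u
  have hS_lower : d * #B ≤ #S := by
    rw [card_sigma, mul_comm, ← smul_eq_mul, ← sum_const]
    exact sum_le_sum fun σ hσ => (mem_filter.1 hσ).2.2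
  have hS_upper : #S ≤ #(B \ B') * n := by
    refine (card_le_card_of_injOn (t := (B \ B') ×ˢ (univ : Finset (Fin n)))
      (fun p => (swapRank p.1 ⟨i, hi⟩ p.2, p.1.symm p.2)) ?_ ?_).trans (by simp)
    · rintro ⟨σ, u⟩ hp
      simp only [S, coe_sigma, Set.mem_sigma_iff, mem_coe, mem_filter] at hp
      obtain ⟨hσB, hu, hvu⟩ := hp
      have hR := greedyRemaining_swapRank G hi hu
      simp only [coe_product, coe_univ, Set.mem_prod, Set.mem_univ, and_true, mem_coe,
        mem_sdiff, B, B', highDegreeSurvivors, mem_filter, mem_univ, true_and, hR, not_and]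
      refine ⟨(mem_filter.1 hσB).2, fun hv => absurd hv ?_⟩
      exact notMem_greedyRemaining_succ_of_adj G hi (hR ▸ hu) hvu.symm
        (swapRank_apply_self σ _ u)
    · rintro ⟨σ₁, u₁⟩ - ⟨σ₂, u₂⟩ - h
      simp only [Prod.mk.injEq] at h
      obtain ⟨hτ, hb⟩ := h
      have hσ : σ₁ = σ₂ := by
        rw [← swap_trans_swapRank σ₁ ⟨i, hi⟩ u₁, ← swap_trans_swapRank σ₂ ⟨i, hi⟩ u₂, hτ, hb]
      subst hσ
      simpa using hb
  have hcount : d * #B ≤ n * #B - n * #B' := by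
    rw [← Nat.mul_sub, ← card_sdiff_of_subset hB'B, mul_comm n]
    exact hS_lower.trans hS_upper
  have hmono := Nat.mul_le_mul_left n (card_le_card hB'B)
  rw [Nat.sub_mul]
  omega

theorem pow_mul_card_highDegreeSurvivors_le (v : V) (d : ℕ) {i : ℕ} (hi : i ≤ n) :
    n ^ i * #(highDegreeSurvivors G n v d i) ≤ (n - d) ^ i * Fintype.card (Fin n ≃ V) := by
  induction i with
  | zero => simpa using card_le_univ _
  | succ i ih =>
    calc n ^ (i + 1) * #(highDegreeSurvivors G n v d (i + 1))
        = n ^ i * (n * #(highDegreeSurvivors G n v d (i + 1))) := by ring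
      _ ≤ n ^ i * ((n - d) * #(highDegreeSurvivors G n v d i)) :=
        Nat.mul_le_mul_left _ (card_highDegreeSurvivors_succ_le G v d hi)
      _ = (n - d) * (n ^ i * #(highDegreeSurvivors G n v d i)) := by ring
      _ ≤ (n - d) * ((n - d) ^ i * Fintype.card (Fin n ≃ V)) :=
        Nat.mul_le_mul_left _ (ih (by omega))
      _ = (n - d) ^ (i + 1) * Fintype.card (Fin n ≃ V) := by ring

theorem card_highDegreeSurvivors_le_exp (v : V) (d : ℕ) {r : ℕ} (hr : r ≤ n) :
    (#(highDegreeSurvivors G n v d r) : ℝ) ≤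
      Real.exp (-(d * r / n)) * Fintype.card (Fin n ≃ V) := by
  have hpow : (0 : ℝ) < (n : ℝ) ^ r := by
    rcases n.eq_zero_or_pos with rfl | hn
    · simp [Nat.le_zero.1 hr]
    · positivity
  have hsub : (((n - d : ℕ) : ℝ)) ^ r ≤ (n : ℝ) ^ r * Real.exp (-(d * r / n)) := by
    calc (((n - d : ℕ) : ℝ)) ^ r ≤ ((n : ℝ) * Real.exp (-(d / n))) ^ r := by
          gcongr; exact natCast_sub_le_mul_exp_neg n d
      _ = (n : ℝ) ^ r * Real.exp (-(d * r / n)) := by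
          rw [mul_pow, ← Real.exp_nat_mul]; ring_nf
  refine le_of_mul_le_mul_left ?_ hpow
  calc (n : ℝ) ^ r * #(highDegreeSurvivors G n v d r)
      ≤ ((n - d : ℕ) : ℝ) ^ r * Fintype.card (Fin n ≃ V) := by
        exact_mod_cast pow_mul_card_highDegreeSurvivors_le G v d hr
    _ ≤ (n : ℝ) ^ r * Real.exp (-(d * r / n)) * Fintype.card (Fin n ≃ V) := by gcongr
    _ = _ := by ring

theorem card_exists_highDegree_le_exp (hV : Fintype.card V = n) (d : ℕ) {r : ℕ} (hr : r ≤ n) :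
    (#(univ.filter fun σ : Fin n ≃ V => ∃ v ∈ greedyRemaining G σ r,
        d ≤ #((greedyRemaining G σ r).filter fun u => G.Adj v u)) : ℝ) ≤
      n * Real.exp (-(d * r / n)) * Fintype.card (Fin n ≃ V) := by
  have hcover : (univ.filter fun σ : Fin n ≃ V => ∃ v ∈ greedyRemaining G σ r,
      d ≤ #((greedyRemaining G σ r).filter fun u => G.Adj v u)) =
        univ.biUnion fun v => highDegreeSurvivors G n v d r := by
    ext σ
    simp [highDegreeSurvivors]
  calc (#(univ.filter fun σ : Fin n ≃ V => ∃ v ∈ greedyRemaining G σ r,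
        d ≤ #((greedyRemaining G σ r).filter fun u => G.Adj v u)) : ℝ)
      ≤ ∑ v : V, (#(highDegreeSurvivors G n v d r) : ℝ) := by
        rw [hcover]; exact_mod_cast card_biUnion_le
    _ ≤ ∑ _v : V, Real.exp (-(d * r / n)) * Fintype.card (Fin n ≃ V) :=
        sum_le_sum fun v _ => card_highDegreeSurvivors_le_exp G v d hr
    _ = n * Real.exp (-(d * r / n)) * Fintype.card (Fin n ≃ V) := by
        rw [sum_const, card_univ, hV, nsmul_eq_mul, mul_assoc]

end GreedyProcess

theorem greedy_mis_residual_max_degree_general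
    {V : Type*} [Fintype V] [DecidableEq V] (G : SimpleGraph V) [DecidableRel G.Adj]
    (n : ℕ) (hn : Fintype.card V = n)
    (r : ℕ) (hr1 : 1 ≤ r) (hr : r ≤ n) :
    1 - 1 / (n : ℝ) ^ 4 ≤
      ((Finset.univ.filter (fun σ : Fin n ≃ V =>
          ∀ v ∈ greedyRemaining G σ r,
            (((greedyRemaining G σ r).filter (fun u => G.Adj v u)).card : ℝ) ≤
              20 * n * Real.log n / r)).card : ℝ) /
        (Fintype.card (Fin n ≃ V) : ℝ) := by
  have : Nonempty (Fin n ≃ V) := ⟨(Fintype.equivFinOfCardEq hn).symm⟩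
  have hn0 : (0 : ℝ) < n := by exact_mod_cast (show 0 < n by omega)
  have hr0 : (0 : ℝ) < r := by exact_mod_cast hr1
  set b : ℝ := 20 * n * Real.log n / r
  have hb : 0 ≤ b := by have := Real.log_natCast_nonneg n; positivity
  set d := ⌊b⌋₊ + 1
  have hbd : b < d := by simpa [d] using Nat.lt_floor_add_one b
  have hbad : (univ.filter fun σ : Fin n ≃ V => ¬∀ v ∈ greedyRemaining G σ r,
      (#((greedyRemaining G σ r).filter fun u => G.Adj v u) : ℝ) ≤ b) =
        univ.filter fun σ => ∃ v ∈ greedyRemaining G σ r,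
          d ≤ #((greedyRemaining G σ r).filter fun u => G.Adj v u) := by
    refine filter_congr fun σ _ => ?_
    simp only [not_forall, not_le, exists_prop, d, Nat.add_one_le_iff, Nat.floor_lt hb]
  refine one_sub_le_card_filter_div _ (hbad ▸ (card_exists_highDegree_le_exp G hn d hr).trans ?_)
  gcongr
  refine mul_exp_neg_le_one_div_pow_four (by omega) ?_
  rw [le_div_iff₀ hn0]
  have := (div_lt_iff₀ hr0).1 hbd
  have := Real.log_natCast_nonneg n
  nlinarith

/-- In the random-order greedy MIS process on an `n`-vertex graph `G`
(`n ≥ 2`), for any `1 ≤ r ≤ n`, with probability at least `1 - n⁻⁴` over the uniformly random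
order, every vertex of the residual graph `G_r` has degree at most `20·n·ln(n)/r` in `G_r`. -/
theorem greedy_mis_residual_max_degree
    {V : Type*} [Fintype V] [DecidableEq V] (G : SimpleGraph V) [DecidableRel G.Adj]
    (n : ℕ) (hn : Fintype.card V = n) (hn2 : 2 ≤ n)
    (r : ℕ) (hr1 : 1 ≤ r) (hr : r ≤ n) :
    1 - 1 / (n : ℝ) ^ 4 ≤
      ((Finset.univ.filter (fun σ : Fin n ≃ V =>
          ∀ v ∈ greedyRemaining G σ r,
            (((greedyRemaining G σ r).filter (fun u => G.Adj v u)).card : ℝ) ≤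
              20 * n * Real.log n / r)).card : ℝ) /
        (Fintype.card (Fin n ≃ V) : ℝ) :=
  greedy_mis_residual_max_degree_general G n hn r hr1 hr
end

section
/- Let H be a finite simple graph with N ≥ 2 vertices and maximum degree at most D ≥ 1, and let p ∈ (0,1] satisfy p·D ≥ 20·ln N and p·N ≥ 20·ln N. Form a random vertex set S by including each vertex of H independently with probability p. Then with probability at least 1 - N^{-4}, the induced subgraph H[S] has at most 8·p²·N·D edges. -/
/-!
Markov's inequality applied to `2 ^ |A ∩ S|`, whose expectation is `(1 + p) ^ |A| ≤ e ^ (p|A|)`,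
gives `P(|A ∩ S| ≥ 2pm) ≤ e ^ (pm (1 - 2 ln 2)) ≤ e ^ (-pm/3)` whenever `|A| ≤ m`. Taking
`A = V, m = N` and `A = N(v), m = D`, a union bound over these `N + 1` events shows that with
probability at least `1 - (N + 1) N⁻⁶ ≥ 1 - N⁻⁴` we have `|S| < 2pN` and every vertex has fewer
than `2pD` neighbours in `S`; then `H[S]` has at most `|S| · 2pD ≤ 4p²ND` edges.
-/

open Finset

section RandomSubset

variable {V : Type*} [Fintype V]

noncomputable def randomSubsetWeight (p : ℝ) (S : Finset V) : ℝ :=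
  p ^ #S * (1 - p) ^ (Fintype.card V - #S)

noncomputable def randomSubsetProb (p : ℝ) (P : Finset V → Prop) [DecidablePred P] : ℝ :=
  ∑ S with P S, randomSubsetWeight p S

variable (p : ℝ)

theorem sum_randomSubsetWeight_mul_prod (f : V → ℝ) :
    ∑ S, randomSubsetWeight p S * ∏ v ∈ S, f v = ∏ v, (p * f v + (1 - p)) := by
  classical
  rw [prod_add, ← powerset_univ]
  refine sum_congr rfl fun S _ => ?_
  rw [randomSubsetWeight, prod_mul_distrib, prod_const, prod_const, card_univ_sdiff]
  ring

theorem sum_randomSubsetWeight : ∑ S : Finset V, randomSubsetWeight p S = 1 := by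
  simpa using sum_randomSubsetWeight_mul_prod (V := V) p 1

theorem sum_randomSubsetWeight_mul_two_pow_card_inter [DecidableEq V] (A : Finset V) :
    ∑ S, randomSubsetWeight p S * 2 ^ #(A ∩ S) = (1 + p) ^ #A := by
  have h := sum_randomSubsetWeight_mul_prod p (fun v => if v ∈ A then 2 else 1)
  simp only [prod_ite_mem, prod_const, inter_comm _ A] at h
  rw [h, ← univ_inter A, ← prod_const, ← prod_ite_mem]
  exact prod_congr rfl fun v _ => by simp only [mem_inter, mem_univ, true_and]; split_ifs <;> ring

theorem randomSubsetProb_add_randomSubsetProb_not (P : Finset V → Prop) [DecidablePred P] :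
    randomSubsetProb p P + randomSubsetProb p (fun S => ¬ P S) = 1 := by
  rw [randomSubsetProb, randomSubsetProb, sum_filter_add_sum_filter_not, sum_randomSubsetWeight]

variable {p}

theorem randomSubsetWeight_nonneg (hp0 : 0 ≤ p) (hp1 : p ≤ 1) (S : Finset V) :
    0 ≤ randomSubsetWeight p S :=
  mul_nonneg (pow_nonneg hp0 _) (pow_nonneg (sub_nonneg.2 hp1) _)

theorem randomSubsetProb_mono (hp0 : 0 ≤ p) (hp1 : p ≤ 1) {P Q : Finset V → Prop}
    [DecidablePred P] [DecidablePred Q] (h : ∀ S, P S → Q S) :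
    randomSubsetProb p P ≤ randomSubsetProb p Q :=
  sum_le_sum_of_subset_of_nonneg (monotone_filter_right _ fun S _ => h S)
    fun S _ _ => randomSubsetWeight_nonneg hp0 hp1 S

theorem randomSubsetProb_or_le (hp0 : 0 ≤ p) (hp1 : p ≤ 1) (P Q : Finset V → Prop)
    [DecidablePred P] [DecidablePred Q] :
    randomSubsetProb p (fun S => P S ∨ Q S) ≤ randomSubsetProb p P + randomSubsetProb p Q := by
  classical
  rw [randomSubsetProb, randomSubsetProb, randomSubsetProb, filter_or, ← sum_union_inter]
  exact le_add_of_nonneg_right (sum_nonneg fun S _ => randomSubsetWeight_nonneg hp0 hp1 S)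

theorem randomSubsetProb_exists_le (hp0 : 0 ≤ p) (hp1 : p ≤ 1) {ι : Type*} [Fintype ι]
    (P : ι → Finset V → Prop) [∀ i, DecidablePred (P i)] [DecidablePred fun S => ∃ i, P i S] :
    randomSubsetProb p (fun S => ∃ i, P i S) ≤ ∑ i, randomSubsetProb p (P i) := by
  have hw := randomSubsetWeight_nonneg hp0 hp1 (V := V)
  simp only [randomSubsetProb, sum_filter]
  rw [sum_comm]
  refine sum_le_sum fun S _ => ?_
  split_ifs with h
  · obtain ⟨i, hi⟩ := h
    exact (if_pos hi).symm.le.trans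
      (single_le_sum (f := fun j => if P j S then _ else 0)
        (fun j _ => by split_ifs <;> simp [hw S]) (mem_univ i))
  · exact sum_nonneg fun j _ => by split_ifs <;> simp [hw S]

theorem randomSubsetProb_le_card_inter_le [DecidableEq V] (hp0 : 0 ≤ p) (hp1 : p ≤ 1)
    (A : Finset V) (t : ℝ) :
    randomSubsetProb p (fun S => t ≤ #(A ∩ S)) ≤ Real.exp (p * #A) / 2 ^ t := by
  have hw := randomSubsetWeight_nonneg hp0 hp1 (V := V)
  calc randomSubsetProb p (fun S => t ≤ #(A ∩ S))
      ≤ ∑ S with t ≤ #(A ∩ S), randomSubsetWeight p S * 2 ^ #(A ∩ S) / 2 ^ t := by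
        refine sum_le_sum fun S hS => ?_
        have h2 : (2 : ℝ) ^ t ≤ 2 ^ #(A ∩ S) := by
          rw [← Real.rpow_natCast]
          exact Real.rpow_le_rpow_of_exponent_le one_le_two (mem_filter.1 hS).2
        rw [mul_div_assoc]
        exact le_mul_of_one_le_right (hw S) ((one_le_div (by positivity)).2 h2)
    _ ≤ ∑ S, randomSubsetWeight p S * 2 ^ #(A ∩ S) / 2 ^ t :=
        sum_le_sum_of_subset_of_nonneg (filter_subset _ _) fun S _ _ => by
          have := hw S
          positivity
    _ = (1 + p) ^ #A / 2 ^ t := by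
        rw [← sum_div, sum_randomSubsetWeight_mul_two_pow_card_inter]
    _ ≤ Real.exp (p * #A) / 2 ^ t := by
        rw [mul_comm, Real.exp_nat_mul]
        gcongr
        linarith [Real.add_one_le_exp p]

theorem randomSubsetProb_two_mul_le_card_inter_le [DecidableEq V] (hp0 : 0 ≤ p)
    (hp1 : p ≤ 1) {A : Finset V} {m : ℝ} (hA : #A ≤ m) :
    randomSubsetProb p (fun S => 2 * p * m ≤ #(A ∩ S)) ≤ Real.exp (-(p * m / 3)) := by
  have hpm : 0 ≤ p * m := mul_nonneg hp0 ((Nat.cast_nonneg _).trans hA)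
  have hlog2 := Real.log_two_gt_d9
  refine (randomSubsetProb_le_card_inter_le hp0 hp1 A _).trans ?_
  rw [Real.rpow_def_of_pos two_pos, ← Real.exp_sub, Real.exp_le_exp]
  nlinarith [mul_le_mul_of_nonneg_left hA hp0]

theorem randomSubsetProb_two_mul_le_card_inter_le_one_div_pow [DecidableEq V] (hp0 : 0 ≤ p)
    (hp1 : p ≤ 1) {A : Finset V} {m x : ℝ} (hA : #A ≤ m) (hx : 0 < x) (k : ℕ)
    (hm : 3 * k * Real.log x ≤ p * m) :
    randomSubsetProb p (fun S => 2 * p * m ≤ #(A ∩ S)) ≤ 1 / x ^ k := by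
  refine (randomSubsetProb_two_mul_le_card_inter_le hp0 hp1 hA).trans ?_
  rw [one_div, ← Real.exp_log (pow_pos hx k), ← Real.exp_neg, Real.exp_le_exp, Real.log_pow]
  linarith

end RandomSubset

section InducedEdges

variable {V : Type*} [Fintype V] [DecidableEq V] (H : SimpleGraph V) [DecidableRel H.Adj]

theorem card_edgeFinset_filter_subset_le_sum (S : Finset V) :
    #{e ∈ H.edgeFinset | ∀ w ∈ e, w ∈ S} ≤ ∑ u ∈ S, #(H.neighborFinset u ∩ S) := by
  calc #{e ∈ H.edgeFinset | ∀ w ∈ e, w ∈ S}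
      ≤ #(S.biUnion fun u => (H.neighborFinset u ∩ S).image fun v => s(u, v)) := by
        refine card_le_card fun e he => ?_
        induction e with
        | h u v =>
          obtain ⟨huv, hS⟩ := mem_filter.1 he
          have hv : v ∈ H.neighborFinset u ∩ S :=
            mem_inter.2 ⟨by simpa using huv, hS v (Sym2.mem_mk_right u v)⟩
          exact mem_biUnion.2 ⟨u, hS u (Sym2.mem_mk_left u v), mem_image_of_mem _ hv⟩
    _ ≤ ∑ u ∈ S, #((H.neighborFinset u ∩ S).image fun v => s(u, v)) := card_biUnion_le
    _ ≤ ∑ u ∈ S, #(H.neighborFinset u ∩ S) := sum_le_sum fun u _ => card_image_le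

theorem card_edgeFinset_filter_subset_le_mul {S : Finset V} {a b : ℝ} (hb : 0 ≤ b)
    (hS : #S ≤ a) (hdeg : ∀ u ∈ S, #(H.neighborFinset u ∩ S) ≤ b) :
    (#{e ∈ H.edgeFinset | ∀ w ∈ e, w ∈ S} : ℝ) ≤ a * b := by
  calc (#{e ∈ H.edgeFinset | ∀ w ∈ e, w ∈ S} : ℝ)
      ≤ ∑ u ∈ S, (#(H.neighborFinset u ∩ S) : ℝ) :=
        mod_cast card_edgeFinset_filter_subset_le_sum H S
    _ ≤ #S * b := by simpa using sum_le_sum hdeg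
    _ ≤ a * b := mul_le_mul_of_nonneg_right hS hb

end InducedEdges

theorem induced_subgraph_sparsification_general
    {V : Type*} [Fintype V] [DecidableEq V] (H : SimpleGraph V) [DecidableRel H.Adj]
    (N : ℕ) (hN : Fintype.card V = N) (hN2 : 2 ≤ N)
    (D : ℕ) (hdeg : ∀ v : V, H.degree v ≤ D)
    (p : ℝ) (hp0 : 0 < p) (hp1 : p ≤ 1)
    (hpD : 20 * Real.log N ≤ p * D) (hpN : 20 * Real.log N ≤ p * N) :
    1 - 1 / (N : ℝ) ^ 4 ≤
      ∑ S ∈ Finset.univ.filter (fun S : Finset V =>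
          (((H.edgeFinset.filter (fun e => ∀ w : V, w ∈ e → w ∈ S)).card : ℝ) ≤
            8 * p ^ 2 * N * D)),
        p ^ S.card * (1 - p) ^ (N - S.card) := by
  subst hN
  set n := Fintype.card V
  have hn : (2 : ℝ) ≤ n := mod_cast hN2
  have hlog : 0 < Real.log n := Real.log_pos (by linarith)
  have tail : ∀ (A : Finset V) (m : ℕ), #A ≤ m → 20 * Real.log n ≤ p * m →
      randomSubsetProb p (fun S => 2 * p * m ≤ #(A ∩ S)) ≤ 1 / (n : ℝ) ^ 6 :=
    fun A m hA hm => randomSubsetProb_two_mul_le_card_inter_le_one_div_pow hp0.le hp1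
      (mod_cast hA) (by positivity) 6 (by push_cast; linarith)
  let Bad (S : Finset V) : Prop :=
    2 * p * n ≤ #(univ ∩ S) ∨ ∃ v, 2 * p * D ≤ #(H.neighborFinset v ∩ S)
  let Sparse (S : Finset V) : Prop :=
    (#{e ∈ H.edgeFinset | ∀ w ∈ e, w ∈ S} : ℝ) ≤ 8 * p ^ 2 * n * D
  have sparse_of_not_bad : ∀ S, ¬ Bad S → Sparse S := by
    intro S hS
    simp only [Bad, univ_inter, not_or, not_exists, not_le] at hS
    refine (card_edgeFinset_filter_subset_le_mul H (by positivity) hS.1.le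
      fun u _ => (hS.2 u).le).trans ?_
    nlinarith [mul_nonneg hp0.le (Nat.cast_nonneg (α := ℝ) D)]
  have hBad : randomSubsetProb p Bad ≤ (n + 1) / (n : ℝ) ^ 6 := by
    refine (randomSubsetProb_or_le hp0.le hp1 _ _).trans ?_
    grw [randomSubsetProb_exists_le hp0.le hp1, tail univ n le_rfl hpN,
      sum_le_sum fun v _ => tail (H.neighborFinset v) D (by simpa using hdeg v) hpD]
    rw [sum_const, card_univ, nsmul_eq_mul]
    exact le_of_eq (by ring)
  have hfinal : (n + 1) / (n : ℝ) ^ 6 ≤ 1 / (n : ℝ) ^ 4 := by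
    rw [div_le_div_iff₀ (by positivity) (by positivity)]
    calc ((n : ℝ) + 1) * (n : ℝ) ^ 4 ≤ (n : ℝ) ^ 2 * (n : ℝ) ^ 4 := by gcongr; nlinarith
      _ = 1 * (n : ℝ) ^ 6 := by ring
  have hsplit := randomSubsetProb_add_randomSubsetProb_not p Sparse
  have hnot : randomSubsetProb p (fun S => ¬ Sparse S) ≤ randomSubsetProb p Bad :=
    randomSubsetProb_mono hp0.le hp1 fun S => not_imp_comm.1 (sparse_of_not_bad S)
  show 1 - 1 / (n : ℝ) ^ 4 ≤ randomSubsetProb p Sparse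
  linarith

/-- Let `H` be a graph on `N ≥ 2` vertices with maximum degree at most
`D ≥ 1`, and let `p ∈ (0,1]` with `p·D ≥ 20 ln N` and `p·N ≥ 20 ln N`. If each vertex is
included in a random set `S` independently with probability `p`, then with probability at
least `1 - N⁻⁴` the induced subgraph `H[S]` has at most `8·p²·N·D` edges. (The probability of
a collection of sets `S` is `∑_S p^{|S|}(1-p)^{N-|S|}`.) -/
theorem induced_subgraph_sparsification
    {V : Type*} [Fintype V] [DecidableEq V] (H : SimpleGraph V) [DecidableRel H.Adj]
    (N : ℕ) (hN : Fintype.card V = N) (hN2 : 2 ≤ N)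
    (D : ℕ) (hD1 : 1 ≤ D) (hdeg : ∀ v : V, H.degree v ≤ D)
    (p : ℝ) (hp0 : 0 < p) (hp1 : p ≤ 1)
    (hpD : 20 * Real.log N ≤ p * D) (hpN : 20 * Real.log N ≤ p * N) :
    1 - 1 / (N : ℝ) ^ 4 ≤
      ∑ S ∈ Finset.univ.filter (fun S : Finset V =>
          (((H.edgeFinset.filter (fun e => ∀ w : V, w ∈ e → w ∈ S)).card : ℝ) ≤
            8 * p ^ 2 * N * D)),
        p ^ S.card * (1 - p) ^ (N - S.card) :=
  induced_subgraph_sparsification_general H N hN hN2 D hdeg p hp0 hp1 hpD hpN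
end

section
/- Let ε > 0, let T be a random variable uniformly distributed on an interval [a, a + 2ε] of length 2ε, and let y, ỹ be real numbers with |y - ỹ| ≤ σ. Then the probability that exactly one of the two events {y ≥ T} and {ỹ ≥ T} occurs is at most σ/ε. -/
open MeasureTheory

theorem setOf_xor_le_eq_Ioc {α : Type*} [LinearOrder α] (y y' : α) :
    {t | Xor (t ≤ y) (t ≤ y')} = Set.Ioc (min y y') (max y y') := by
  ext t
  simp only [Set.mem_ofPred_eq, Set.mem_Ioc, xor_def, min_lt_iff, le_max_iff, not_le]
  grind

theorem Real.volume_setOf_xor_le (y y' : ℝ) :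
    volume {t | Xor (t ≤ y) (t ≤ y')} = ENNReal.ofReal |y - y'| := by
  rw [setOf_xor_le_eq_Ioc, Real.volume_Ioc, max_sub_min_eq_abs']

/-- If `T` is uniformly distributed on an interval `[a, a + 2ε]` of length
`2ε` and `|y - y'| ≤ σ`, then the probability that exactly one of the events `{y ≥ T}` and
`{y' ≥ T}` occurs is at most `σ/ε`. -/
theorem random_threshold_disagreement (ε : ℝ) (hε : 0 < ε) (a y y' σ : ℝ)
    (h : |y - y'| ≤ σ) :
    (volume {t ∈ Set.Icc a (a + 2 * ε) | Xor' (t ≤ y) (t ≤ y')}).toReal / (2 * ε) ≤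
      σ / ε := by
  have hσ : 0 ≤ σ := (abs_nonneg _).trans h
  have hdisagree : (volume {t ∈ Set.Icc a (a + 2 * ε) | Xor (t ≤ y) (t ≤ y')}).toReal ≤ σ :=
    calc _ ≤ (volume {t | Xor (t ≤ y) (t ≤ y')}).toReal :=
          ENNReal.toReal_mono (by simp [Real.volume_setOf_xor_le]) (measure_mono fun _ ht ↦ ht.2)
      _ = |y - y'| := by rw [Real.volume_setOf_xor_le, ENNReal.toReal_ofReal (abs_nonneg _)]
      _ ≤ σ := h
  calc _ ≤ σ / (2 * ε) := div_le_div_of_nonneg_right hdisagree (by positivity)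
    _ ≤ σ / ε := div_le_div_of_nonneg_left hσ hε (by linarith)
end

section
/- Let G = (V,E) be a finite simple graph, let x : E → [0,1] be a fractional matching of G, let 0 < β ≤ 1/2, and let C̃ ⊆ V be a set of vertices such that every v ∈ C̃ satisfies ∑_{e ∋ v} x_e ≥ 1 - β. If |C̃| ≥ 5000, then G contains a matching (a set of pairwise disjoint edges) of size at least |C̃|/50. -/
/-!
Take a maximal matching `M` and let `S` be the set of its `≤ 2|M|` vertices. By maximality every
edge meets `S`, so an edge has at most one endpoint in `C̃ \ S` and at least one in `S`. Counting
the fractional weight edge by edge therefore gives `(1 - β)|C̃ \ S| ≤ ∑_{S} y ≤ |S|`, whence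
`|C̃| ≤ |C̃ \ S| + |S| ≤ 3|S| ≤ 6|M|`.
-/

open Finset

theorem Sym2.card_toFinset_le_two {α : Type*} [DecidableEq α] (z : Sym2 α) :
    #z.toFinset ≤ 2 := by
  rw [Sym2.card_toFinset]
  split_ifs <;> omega

section

variable {V : Type*}

def PairwiseVertexDisjoint (M : Finset (Sym2 V)) : Prop :=
  ∀ e ∈ M, ∀ f ∈ M, e ≠ f → ∀ v : V, v ∈ e → v ∉ f

variable [DecidableEq V]

def vertexWeight (E : Finset (Sym2 V)) (x : Sym2 V → ℝ) (v : V) : ℝ :=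
  ∑ e ∈ E.filter (fun e => v ∈ e), x e

theorem PairwiseVertexDisjoint.insert {M : Finset (Sym2 V)} (hM : PairwiseVertexDisjoint M)
    {e : Sym2 V} (he : ∀ v ∈ e, v ∉ M.biUnion Sym2.toFinset) :
    PairwiseVertexDisjoint (insert e M) := by
  have hfree : ∀ v ∈ e, ∀ f ∈ M, v ∉ f := fun v hv f hf hvf =>
    he v hv (mem_biUnion.2 ⟨f, hf, Sym2.mem_toFinset.2 hvf⟩)
  intro f hf g hg hfg v hvf hvg
  rcases mem_insert.1 hf with rfl | hfM <;> rcases mem_insert.1 hg with rfl | hgM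
  · exact hfg rfl
  · exact hfree v hvf g hgM hvg
  · exact hfree v hvg f hfM hvf
  · exact hM f hfM g hgM hfg v hvf hvg

theorem card_biUnion_toFinset_le (M : Finset (Sym2 V)) :
    #(M.biUnion Sym2.toFinset) ≤ 2 * #M :=
  calc #(M.biUnion Sym2.toFinset) ≤ ∑ e ∈ M, #e.toFinset := card_biUnion_le
    _ ≤ ∑ _e ∈ M, 2 := sum_le_sum fun e _ => e.card_toFinset_le_two
    _ = 2 * #M := by rw [sum_const, smul_eq_mul, mul_comm]

theorem exists_pairwiseVertexDisjoint_subset_covering (E : Finset (Sym2 V)) :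
    ∃ M ⊆ E, PairwiseVertexDisjoint M ∧ ∀ e ∈ E, ∃ u ∈ M.biUnion Sym2.toFinset, u ∈ e := by
  classical
  obtain ⟨M, hM, hmax⟩ := exists_max_image (E.powerset.filter PairwiseVertexDisjoint) card
    ⟨∅, mem_filter.2 ⟨empty_mem_powerset E, by simp [PairwiseVertexDisjoint]⟩⟩
  obtain ⟨hME, hM⟩ := mem_filter.1 hM
  refine ⟨M, mem_powerset.1 hME, hM, fun e he => ?_⟩
  by_contra! hfree
  have heM : e ∉ M := fun heM =>
    hfree _ (mem_biUnion.2 ⟨e, heM, Sym2.mem_toFinset.2 e.out_fst_mem⟩) e.out_fst_mem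
  have hins := hmax (insert e M) (mem_filter.2
    ⟨mem_powerset.2 (insert_subset he (mem_powerset.1 hME)),
      hM.insert fun v hv hvS => hfree v hvS hv⟩)
  rw [card_insert_of_notMem heM] at hins
  omega

theorem sum_vertexWeight_eq (E : Finset (Sym2 V)) (x : Sym2 V → ℝ) (A : Finset V) :
    ∑ v ∈ A, vertexWeight E x v = ∑ e ∈ E, (#(A.filter (fun v => v ∈ e)) : ℝ) * x e := by
  simp only [vertexWeight, sum_filter]
  rw [sum_comm]
  refine sum_congr rfl fun e _ => ?_
  rw [← sum_filter, sum_const, nsmul_eq_mul]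

theorem sum_vertexWeight_le_of_forall_card_filter_le {E : Finset (Sym2 V)} {x : Sym2 V → ℝ}
    (hx : ∀ e ∈ E, 0 ≤ x e) {A B : Finset V}
    (hAB : ∀ e ∈ E, #(A.filter (fun v => v ∈ e)) ≤ #(B.filter (fun v => v ∈ e))) :
    ∑ v ∈ A, vertexWeight E x v ≤ ∑ v ∈ B, vertexWeight E x v := by
  rw [sum_vertexWeight_eq, sum_vertexWeight_eq]
  exact sum_le_sum fun e he => mul_le_mul_of_nonneg_right (by exact_mod_cast hAB e he) (hx e he)

theorem card_filter_mem_sdiff_le_one {S : Finset V} {e : Sym2 V} (he : ∃ u ∈ S, u ∈ e)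
    (T : Finset V) : #((T \ S).filter (fun v => v ∈ e)) ≤ 1 := by
  obtain ⟨u, huS, hue⟩ := he
  have hsub : (T \ S).filter (fun v => v ∈ e) ⊆ e.toFinset.erase u := fun v hv => by
    obtain ⟨hvTS, hve⟩ := mem_filter.1 hv
    exact mem_erase.2 ⟨fun hvu => (mem_sdiff.1 hvTS).2 (hvu ▸ huS), Sym2.mem_toFinset.2 hve⟩
  have := card_erase_of_mem (Sym2.mem_toFinset.2 hue)
  have := e.card_toFinset_le_two
  have := card_le_card hsub
  omega

theorem mul_card_sdiff_le_card_of_covering {E : Finset (Sym2 V)} {x : Sym2 V → ℝ}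
    (hx : ∀ e ∈ E, 0 ≤ x e) {S : Finset V} (hS : ∀ e ∈ E, ∃ u ∈ S, u ∈ e)
    (hS1 : ∀ v ∈ S, vertexWeight E x v ≤ 1) {T : Finset V} {c : ℝ}
    (hT : ∀ v ∈ T, c ≤ vertexWeight E x v) :
    c * #(T \ S) ≤ #S :=
  calc c * #(T \ S) = ∑ _v ∈ T \ S, c := by rw [sum_const, nsmul_eq_mul, mul_comm]
    _ ≤ ∑ v ∈ T \ S, vertexWeight E x v := sum_le_sum fun v hv => hT v (mem_sdiff.1 hv).1
    _ ≤ ∑ v ∈ S, vertexWeight E x v := sum_vertexWeight_le_of_forall_card_filter_le hx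
          fun e he => (card_filter_mem_sdiff_le_one (hS e he) T).trans
            (one_le_card.2 (by simpa [Finset.Nonempty] using hS e he))
    _ ≤ ∑ _v ∈ S, 1 := sum_le_sum hS1
    _ = #S := by rw [sum_const, nsmul_eq_mul, mul_one]

theorem exists_pairwiseVertexDisjoint_card_le_six_mul (E : Finset (Sym2 V))
    {x : Sym2 V → ℝ} (hx : ∀ e ∈ E, 0 ≤ x e) (hx1 : ∀ v, vertexWeight E x v ≤ 1)
    {β : ℝ} (hβ : β ≤ 1 / 2) {T : Finset V} (hT : ∀ v ∈ T, 1 - β ≤ vertexWeight E x v) :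
    ∃ M ⊆ E, PairwiseVertexDisjoint M ∧ #T ≤ 6 * #M := by
  obtain ⟨M, hME, hM, hcover⟩ := exists_pairwiseVertexDisjoint_subset_covering E
  refine ⟨M, hME, hM, ?_⟩
  set S := M.biUnion Sym2.toFinset
  have hTS : (1 - β) * #(T \ S) ≤ #S :=
    mul_card_sdiff_le_card_of_covering hx hcover (fun v _ => hx1 v) hT
  have hSM : #S ≤ 2 * #M := card_biUnion_toFinset_le M
  have hsplit : #T ≤ #(T \ S) + #S := card_le_card_sdiff_add_card
  have hTS' : #(T \ S) ≤ 2 * #S := by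
    have : ((#(T \ S) : ℕ) : ℝ) ≤ 2 * #S := by
      nlinarith [Nat.cast_nonneg (α := ℝ) #(T \ S)]
    exact_mod_cast this
  omega

end

theorem rounding_existence_of_large_matching_general
    {V : Type*} [Fintype V] [DecidableEq V] (G : SimpleGraph V) [DecidableRel G.Adj]
    (x : Sym2 V → ℝ)
    (hx0 : ∀ e ∈ G.edgeFinset, 0 ≤ x e)
    (hfm : ∀ v : V, ∑ e ∈ G.edgeFinset.filter (fun e => v ∈ e), x e ≤ 1)
    (β : ℝ) (hβ1 : β ≤ 1 / 2)
    (Ct : Finset V)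
    (hCt : ∀ v ∈ Ct, 1 - β ≤ ∑ e ∈ G.edgeFinset.filter (fun e => v ∈ e), x e) :
    ∃ M : Finset (Sym2 V), M ⊆ G.edgeFinset ∧
      (∀ e ∈ M, ∀ f ∈ M, e ≠ f → ∀ v : V, v ∈ e → v ∉ f) ∧
      (Ct.card : ℝ) / 50 ≤ (M.card : ℝ) := by
  obtain ⟨M, hME, hM, hcard⟩ := 
    exists_pairwiseVertexDisjoint_card_le_six_mul G.edgeFinset hx0 hfm hβ1 hCt
  refine ⟨M, hME, hM, ?_⟩
  have : (Ct.card : ℝ) ≤ 6 * M.card := by exact_mod_cast hcard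
  linarith

/-- If `x` is a fractional matching of `G`, `0 < β ≤ 1/2`, and `C̃` is a set
of vertices each of fractional weight at least `1 - β`, with `|C̃| ≥ 5000`, then `G` contains
a matching (a set of pairwise disjoint edges) of size at least `|C̃|/50`. -/
theorem rounding_existence_of_large_matching
    {V : Type*} [Fintype V] [DecidableEq V] (G : SimpleGraph V) [DecidableRel G.Adj]
    (x : Sym2 V → ℝ)
    (hx0 : ∀ e ∈ G.edgeFinset, 0 ≤ x e) (hx1 : ∀ e ∈ G.edgeFinset, x e ≤ 1)
    (hfm : ∀ v : V, ∑ e ∈ G.edgeFinset.filter (fun e => v ∈ e), x e ≤ 1)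
    (β : ℝ) (hβ0 : 0 < β) (hβ1 : β ≤ 1 / 2)
    (Ct : Finset V)
    (hCt : ∀ v ∈ Ct, 1 - β ≤ ∑ e ∈ G.edgeFinset.filter (fun e => v ∈ e), x e)
    (hbig : 5000 ≤ Ct.card) :
    ∃ M : Finset (Sym2 V), M ⊆ G.edgeFinset ∧
      (∀ e ∈ M, ∀ f ∈ M, e ≠ f → ∀ v : V, v ∈ e → v ∉ f) ∧
      (Ct.card : ℝ) / 50 ≤ (M.card : ℝ) :=
  rounding_existence_of_large_matching_general G x hx0 hfm β hβ1 Ct hCt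
end

section
/- The function f counting good edges in the randomized rounding process has bounded differences with constant 2: for any assignment of the variables (X_v)_{v ∈ C̃} and any single vertex v ∈ C̃, changing the value of X_v (to any other element of N(v) ∪ {⋆}) while keeping all other coordinates fixed changes the number of good edges by at most 2. -/
open Finset

variable {V : Type*}

/-- The probability weight of a configuration `X` of the randomized rounding process: each
vertex `v ∈ C̃` independently picks a neighbor `u` with probability `x_{{u,v}}/10`, and picks
`⋆` (encoded as `none`) with probability `1 - (∑_{e ∋ v} x_e)/10`. -/
noncomputable def roundWeight [Fintype V] [DecidableEq V] (G : SimpleGraph V)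
    [DecidableRel G.Adj] (x : Sym2 V → ℝ) (Ct : Finset V)
    (X : {v // v ∈ Ct} → Option V) : ℝ :=
  ∏ v : {v // v ∈ Ct},
    match X v with
    | none => 1 - (∑ e ∈ G.edgeFinset.filter (fun e => v.1 ∈ e), x e) / 10
    | some u => if G.Adj v.1 u then x s(v.1, u) / 10 else 0

/-- The (multi)set of edges `H_X = {{v, X_v} : v ∈ C̃, X_v ≠ ⋆}` proposed by a configuration
`X` of the randomized rounding process. -/
def proposedEdges [DecidableEq V] (Ct : Finset V)
    (X : {v // v ∈ Ct} → Option V) : Finset (Sym2 V) :=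
  (Finset.univ.filter (fun v : {v // v ∈ Ct} => (X v).isSome)).image
    (fun v => s(v.1, (X v).getD v.1))

/-- `f(X)`: the number of good edges of `H_X`, i.e. edges of `H_X` sharing no endpoint with
any other edge of `H_X`. The good edges form a matching. -/
def goodCount [Fintype V] [DecidableEq V] (Ct : Finset V)
    (X : {v // v ∈ Ct} → Option V) : ℕ :=
  ((proposedEdges Ct X).filter (fun e =>
    ∀ f ∈ proposedEdges Ct X, f ≠ e → ∀ w : V, w ∈ e → w ∉ f)).card

section GoodEdges

variable {α : Type*} [Fintype α] [DecidableEq α]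

def goodEdges (E : Finset (Sym2 α)) : Finset (Sym2 α) :=
  E.filter fun e => ∀ f ∈ E, f ≠ e → ∀ w : α, w ∈ e → w ∉ f

theorem mem_goodEdges {E : Finset (Sym2 α)} {e : Sym2 α} :
    e ∈ goodEdges E ↔ e ∈ E ∧ ∀ f ∈ E, f ≠ e → ∀ w : α, w ∈ e → w ∉ f :=
  mem_filter

theorem eq_of_mem_goodEdges {E : Finset (Sym2 α)} {e e' : Sym2 α} {w : α}
    (he : e ∈ goodEdges E) (he' : e' ∈ goodEdges E) (hw : w ∈ e) (hw' : w ∈ e') : e = e' := by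
  by_contra hne
  exact (mem_goodEdges.mp he).2 e' (mem_goodEdges.mp he').1 (Ne.symm hne) w hw hw'

theorem card_filter_mem_goodEdges_le_one (E : Finset (Sym2 α)) (w : α) :
    #((goodEdges E).filter (w ∈ ·)) ≤ 1 := by
  refine card_le_one.mpr fun e he e' he' => ?_
  rw [mem_filter] at he he'
  exact eq_of_mem_goodEdges he.1 he'.1 he.2 he'.2

/-- An edge that stops being good when `s(v, a)` is replaced by `s(v, b)` either was the removed
edge or meets the added one. -/
theorem mem_or_mem_of_mem_goodEdges_sdiff {E₁ E₂ : Finset (Sym2 α)} {v a b : α}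
    (h₁ : E₁ \ E₂ ⊆ {s(v, a)}) (h₂ : E₂ \ E₁ ⊆ {s(v, b)}) {e : Sym2 α}
    (he : e ∈ goodEdges E₁ \ goodEdges E₂) : v ∈ e ∨ b ∈ e := by
  obtain ⟨hgood₁, hgood₂⟩ := mem_sdiff.mp he
  rw [mem_goodEdges] at hgood₁ hgood₂
  by_cases heE₂ : e ∈ E₂
  · simp only [heE₂, true_and, not_forall, not_not] at hgood₂
    obtain ⟨f, hfE₂, hfe, w, hwe, hwf⟩ := hgood₂
    have hfE₁ : f ∉ E₁ := fun hfE₁ => hgood₁.2 f hfE₁ hfe w hwe hwf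
    have hf : f = s(v, b) := mem_singleton.mp (h₂ (mem_sdiff.mpr ⟨hfE₂, hfE₁⟩))
    subst hf
    rcases Sym2.mem_iff.mp hwf with rfl | rfl
    · exact Or.inl hwe
    · exact Or.inr hwe
  · have he : e = s(v, a) := mem_singleton.mp (h₁ (mem_sdiff.mpr ⟨hgood₁.1, heE₂⟩))
    exact Or.inl (he ▸ Sym2.mem_mk_left v a)

/-- Good edges are pairwise disjoint, so at most one of the lost ones contains `v` and at most
one contains `b`. -/
theorem card_goodEdges_le_add_two {E₁ E₂ : Finset (Sym2 α)} {v a b : α}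
    (h₁ : E₁ \ E₂ ⊆ {s(v, a)}) (h₂ : E₂ \ E₁ ⊆ {s(v, b)}) :
    #(goodEdges E₁) ≤ #(goodEdges E₂) + 2 := by
  have hlost : goodEdges E₁ \ goodEdges E₂ ⊆
      (goodEdges E₁).filter (v ∈ ·) ∪ (goodEdges E₁).filter (b ∈ ·) := by
    intro e he
    have he₁ := (mem_sdiff.mp he).1
    rcases mem_or_mem_of_mem_goodEdges_sdiff h₁ h₂ he with hv | hb
    · exact mem_union_left _ (mem_filter.mpr ⟨he₁, hv⟩)
    · exact mem_union_right _ (mem_filter.mpr ⟨he₁, hb⟩)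
  calc #(goodEdges E₁)
      ≤ #(goodEdges E₁ \ goodEdges E₂) + #(goodEdges E₂) := card_le_card_sdiff_add_card
    _ ≤ #((goodEdges E₁).filter (v ∈ ·)) + #((goodEdges E₁).filter (b ∈ ·))
          + #(goodEdges E₂) := by
        gcongr
        exact (card_le_card hlost).trans (card_union_le _ _)
    _ ≤ #(goodEdges E₂) + 2 := by
        have := card_filter_mem_goodEdges_le_one E₁ v
        have := card_filter_mem_goodEdges_le_one E₁ b
        omega

end GoodEdges

theorem goodCount_eq_card_goodEdges [Fintype V] [DecidableEq V] (Ct : Finset V)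
    (X : {v // v ∈ Ct} → Option V) : goodCount Ct X = #(goodEdges (proposedEdges Ct X)) :=
  rfl

theorem proposedEdges_sdiff_subset [DecidableEq V] {Ct : Finset V}
    {X Y : {v // v ∈ Ct} → Option V} {v : {v // v ∈ Ct}} (h : ∀ w, w ≠ v → Y w = X w) :
    proposedEdges Ct Y \ proposedEdges Ct X ⊆ {s(v.1, (Y v).getD v.1)} := by
  intro e he
  obtain ⟨hY, hX⟩ := mem_sdiff.mp he
  simp only [proposedEdges, mem_image, mem_filter, mem_univ, true_and] at hY hX
  obtain ⟨w, hw, rfl⟩ := hY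
  by_cases hwv : w = v
  · subst hwv
    exact mem_singleton_self _
  · exact absurd ⟨w, h w hwv ▸ hw, by rw [h w hwv]⟩ hX

theorem goodCount_le_add_two [Fintype V] [DecidableEq V] {Ct : Finset V}
    {X Y : {v // v ∈ Ct} → Option V} {v : {v // v ∈ Ct}} (h : ∀ w, w ≠ v → Y w = X w) :
    goodCount Ct Y ≤ goodCount Ct X + 2 := by
  rw [goodCount_eq_card_goodEdges, goodCount_eq_card_goodEdges]
  exact card_goodEdges_le_add_two (proposedEdges_sdiff_subset h)
    (proposedEdges_sdiff_subset fun w hw => (h w hw).symm)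

theorem rounding_bounded_differences_general [Fintype V] [DecidableEq V] (Ct : Finset V)
    (X : {v // v ∈ Ct} → Option V)
    (v : {v // v ∈ Ct}) (o : Option V) :
    |(goodCount Ct (Function.update X v o) : ℤ) - (goodCount Ct X : ℤ)| ≤ 2 := by
  have hup : goodCount Ct (Function.update X v o) ≤ goodCount Ct X + 2 :=
    goodCount_le_add_two fun w hw => Function.update_of_ne hw o X
  have hdown : goodCount Ct X ≤ goodCount Ct (Function.update X v o) + 2 :=
    goodCount_le_add_two fun w hw => (Function.update_of_ne hw o X).symm
  rw [abs_le]
  omega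

/-- The good-edge count `f` of the randomized rounding process has bounded
differences with constant `2`: for any configuration `X` (with values in `N(v) ∪ {⋆}`), any
`v ∈ C̃`, and any new value `o ∈ N(v) ∪ {⋆}`, changing the coordinate `X_v` to `o` while
keeping all other coordinates fixed changes the number of good edges by at most `2`. -/
theorem rounding_bounded_differences [Fintype V] [DecidableEq V] (G : SimpleGraph V)
    [DecidableRel G.Adj] (Ct : Finset V)
    (X : {v // v ∈ Ct} → Option V)
    (hX : ∀ w : {v // v ∈ Ct}, ∀ u : V, X w = some u → G.Adj w.1 u)
    (v : {v // v ∈ Ct}) (o : Option V) (ho : ∀ u : V, o = some u → G.Adj v.1 u) :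
    |(goodCount Ct (Function.update X v o) : ℤ) - (goodCount Ct X : ℤ)| ≤ 2 :=
  rounding_bounded_differences_general Ct X v o
end
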